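/- Robustness guarantee for randomized smoothing (Cohen et al., re-proved via Lipschitz property): Let σ > 0 and let f_A, f_B : ℝⁿ → [0,1] be measurable with σ-smoothed transforms f̂_A, f̂_B taking values in (0,1). Fix x ∈ ℝⁿ, and set p_A = f̂_A(x), p_B = f̂_B(x) with p_B ≤ p_A. If δ ∈ ℝⁿ satisfies ‖δ‖₂ < (σ/2)(Φ⁻¹(p_A) - Φ⁻¹(p_B)), then f̂_A(x + δ) > f̂_B(x + δ). Equivalently, any δ with f̂_A(x + δ) ≤ f̂_B(x + δ) satisfies ‖δ‖₂ ≥ (σ/2)(Φ⁻¹(p_A) - Φ⁻¹(p_B)). -/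

import Mathlib

open MeasureTheory Real

/-- The `n`-dimensional isotropic Gaussian measure `N(0, σ² Iₙ)`, with density
`(2πσ²)^{-n/2} exp(-‖t‖²/(2σ²))` with respect to Lebesgue measure. -/
noncomputable def isoGaussian (n : ℕ) (σ : ℝ) : Measure (EuclideanSpace ℝ (Fin n)) :=
  volume.withDensity fun t =>
    ENNReal.ofReal ((2 * π * σ ^ 2) ^ (-(n : ℝ) / 2) * Real.exp (-‖t‖ ^ 2 / (2 * σ ^ 2)))

/-- The standard Gaussian CDF `Φ(a) = (1/√(2π)) ∫_{-∞}^a exp(-s²/2) ds`. -/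
noncomputable def stdGaussianCDF (a : ℝ) : ℝ :=
  (Real.sqrt (2 * π))⁻¹ * ∫ s in Set.Iic a, Real.exp (-s ^ 2 / 2)

/-- The inverse `Φ⁻¹ : (0,1) → ℝ` of the standard Gaussian CDF. -/
noncomputable def stdGaussianCDFInv : ℝ → ℝ :=
  Function.invFun stdGaussianCDF

/-!
By the Neyman–Pearson lemma, among all `f : ℝⁿ → [0,1]` whose smoothing takes the value `p`
at `x`, the smoothing at `x + δ` is smallest for the indicator of a half-space orthogonal
to `δ`: the likelihood ratio of `N(δ, σ² Iₙ)` to `N(0, σ² Iₙ)` at `t` is increasing in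
`⟪δ, t⟫`. Since `⟪u, X⟫ ~ N(0, σ² ‖u‖²)` for `X ~ N(0, σ² Iₙ)`, that minimum is
`Φ(Φ⁻¹(p) - ‖δ‖/σ)`; applied to `1 - f`, the same bound gives `f̂(x + δ) ≤ Φ(Φ⁻¹(p) + ‖δ‖/σ)`.
The lower bound for `f_A` exceeds the upper bound for `f_B` as long as
`‖δ‖ < (σ/2)(Φ⁻¹(p_A) - Φ⁻¹(p_B))`.
-/

open ProbabilityTheory Set GaussianFourier
open scoped RealInnerProductSpace

lemma gaussianPDFReal_zero_one (x : ℝ) :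
    gaussianPDFReal 0 1 x = (√(2 * π))⁻¹ * Real.exp (-x ^ 2 / 2) := by
  simp [gaussianPDFReal]

lemma stdGaussianCDF_eq_setIntegral (a : ℝ) :
    stdGaussianCDF a = ∫ x in Iic a, gaussianPDFReal 0 1 x := by
  simp_rw [gaussianPDFReal_zero_one, integral_const_mul]
  rfl

lemma stdGaussianCDF_eq_measureReal (a : ℝ) :
    stdGaussianCDF a = (gaussianReal 0 1).real (Iic a) := by
  rw [measureReal_def, gaussianReal_apply_eq_integral _ one_ne_zero, ENNReal.toReal_ofReal
    (setIntegral_nonneg measurableSet_Iic fun x _ => gaussianPDFReal_nonneg 0 1 x),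
    stdGaussianCDF_eq_setIntegral]

lemma stdGaussianCDF_eq_cdf : stdGaussianCDF = cdf (gaussianReal 0 1) :=
  funext fun a => by rw [cdf_eq_real, stdGaussianCDF_eq_measureReal]

lemma stdGaussianCDF_neg (a : ℝ) : stdGaussianCDF (-a) = 1 - stdGaussianCDF a := by
  have hint := integrable_gaussianPDFReal 0 1
  have hsplit := intervalIntegral.integral_Iic_add_Ioi (b := a) hint.integrableOn hint.integrableOn
  rw [integral_gaussianPDFReal_eq_one 0 one_ne_zero] at hsplit
  have hsymm :
      ∫ x in Iic (-a), gaussianPDFReal 0 1 x = ∫ x in Ioi a, gaussianPDFReal 0 1 x := by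
    simpa [gaussianPDFReal_zero_one] using integral_comp_neg_Iic (-a) (gaussianPDFReal 0 1)
  rw [stdGaussianCDF_eq_setIntegral, stdGaussianCDF_eq_setIntegral, hsymm]
  linarith

lemma hasDerivAt_stdGaussianCDF (a : ℝ) :
    HasDerivAt stdGaussianCDF (gaussianPDFReal 0 1 a) a := by
  have hint := integrable_gaussianPDFReal 0 1
  have hprim :
      stdGaussianCDF = fun b => stdGaussianCDF 0 + ∫ x in 0..b, gaussianPDFReal 0 1 x := by
    funext b
    rw [stdGaussianCDF_eq_setIntegral, stdGaussianCDF_eq_setIntegral,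
      ← intervalIntegral.integral_Iic_sub_Iic hint.integrableOn hint.integrableOn]
    ring
  have hcont : Continuous (gaussianPDFReal 0 1) := by
    simp_rw [funext gaussianPDFReal_zero_one]; fun_prop
  rw [hprim]
  exact (hcont.integral_hasStrictDerivAt 0 a).hasDerivAt.const_add _

lemma strictMono_stdGaussianCDF : StrictMono stdGaussianCDF :=
  strictMono_of_hasDerivAt_pos hasDerivAt_stdGaussianCDF
    fun a => gaussianPDFReal_pos 0 1 a one_ne_zero

lemma continuous_stdGaussianCDF : Continuous stdGaussianCDF :=
  continuous_iff_continuousAt.2 fun a => (hasDerivAt_stdGaussianCDF a).continuousAt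

lemma stdGaussianCDF_stdGaussianCDFInv {p : ℝ} (hp : p ∈ Ioo 0 1) :
    stdGaussianCDF (stdGaussianCDFInv p) = p := by
  refine Function.invFun_eq (mem_range_of_exists_le_of_exists_ge continuous_stdGaussianCDF ?_ ?_)
  · rw [stdGaussianCDF_eq_cdf]
    exact ((tendsto_cdf_atBot _).eventually_le_const hp.1).exists
  · rw [stdGaussianCDF_eq_cdf]
    exact ((tendsto_cdf_atTop _).eventually_const_le hp.2).exists

lemma stdGaussianCDFInv_one_sub {p : ℝ} (hp : p ∈ Ioo 0 1) :
    stdGaussianCDFInv (1 - p) = -stdGaussianCDFInv p := by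
  have hq : 1 - p ∈ Ioo (0 : ℝ) 1 := ⟨by linarith [hp.2], by linarith [hp.1]⟩
  apply strictMono_stdGaussianCDF.injective
  rw [stdGaussianCDF_neg, stdGaussianCDF_stdGaussianCDFInv hp, stdGaussianCDF_stdGaussianCDFInv hq]

lemma setIntegral_le_integral_mul_of_neymanPearson {α : Type*} [MeasurableSpace α]
    {μ : Measure α} {g g' F : α → ℝ} {S : Set α} {c : ℝ} (hg : Integrable g μ)
    (hg' : Integrable g' μ) (hF : AEStronglyMeasurable F μ) (hF01 : ∀ a, F a ∈ Icc 0 1)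
    (hS : MeasurableSet S) (hc : 0 ≤ c) (hin : ∀ a ∈ S, g' a ≤ c * g a)
    (hout : ∀ a ∉ S, c * g a ≤ g' a) (h : ∫ a in S, g a ∂μ ≤ ∫ a, F a * g a ∂μ) :
    ∫ a in S, g' a ∂μ ≤ ∫ a, F a * g' a ∂μ := by
  have hFbdd : ∀ᵐ a ∂μ, ‖F a‖ ≤ 1 :=
    ae_of_all _ fun a => abs_le.2 ⟨by linarith [(hF01 a).1], (hF01 a).2⟩
  have excess {k : α → ℝ} (hk : Integrable k μ) :
      Integrable (fun a => F a * k a - S.indicator k a) μ ∧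
        ∫ a, F a * k a - S.indicator k a ∂μ = ∫ a, F a * k a ∂μ - ∫ a in S, k a ∂μ :=
    ⟨(hk.bdd_mul hF hFbdd).sub (hk.indicator hS),
      by rw [integral_sub (hk.bdd_mul hF hFbdd) (hk.indicator hS), integral_indicator hS]⟩
  -- `F - 1_S` and `g' - c g` have the same sign everywhere.
  have hsign :
      0 ≤ ∫ a, (F a * g' a - S.indicator g' a) - c * (F a * g a - S.indicator g a) ∂μ := by
    refine integral_nonneg fun a => ?_
    by_cases ha : a ∈ S
    · simp only [indicator_of_mem ha, Pi.zero_apply]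
      nlinarith [mul_nonneg_of_nonpos_of_nonpos (sub_nonpos.2 (hF01 a).2) (sub_nonpos.2 (hin a ha))]
    · simp only [indicator_of_notMem ha, Pi.zero_apply]
      nlinarith [mul_nonneg (hF01 a).1 (sub_nonneg.2 (hout a ha))]
  rw [integral_sub (excess hg').1 ((excess hg).1.const_mul c), integral_const_mul,
    (excess hg').2, (excess hg).2] at hsign
  nlinarith [mul_nonneg hc (sub_nonneg.2 h)]

lemma charFun_map_inner {E : Type*} [NormedAddCommGroup E] [InnerProductSpace ℝ E]
    [MeasurableSpace E] [OpensMeasurableSpace E] (μ : Measure E) (u : E) (r : ℝ) :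
    charFun (μ.map (⟪u, ·⟫)) r = charFun μ (r • u) := by
  rw [charFun_apply, charFun_apply, integral_map (by fun_prop) (by fun_prop)]
  simp_rw [real_inner_smul_right, real_inner_comm u, RCLike.inner_apply, conj_trivial]

noncomputable def isoGaussianPDF (n : ℕ) (σ : ℝ) (t : EuclideanSpace ℝ (Fin n)) : ℝ :=
  (2 * π * σ ^ 2) ^ (-(n : ℝ) / 2) * Real.exp (-‖t‖ ^ 2 / (2 * σ ^ 2))

section IsoGaussian

variable {n : ℕ} {σ : ℝ}

lemma isoGaussian_eq_withDensity :
    isoGaussian n σ = volume.withDensity fun t => ENNReal.ofReal (isoGaussianPDF n σ t) := rfl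

lemma isoGaussianPDF_nonneg (t : EuclideanSpace ℝ (Fin n)) : 0 ≤ isoGaussianPDF n σ t := by
  unfold isoGaussianPDF; positivity

lemma isoGaussianPDF_eq_mul_exp (t : EuclideanSpace ℝ (Fin n)) :
    isoGaussianPDF n σ t =
      (2 * π * σ ^ 2) ^ (-(n : ℝ) / 2) * Real.exp (-(1 / (2 * σ ^ 2)) * ‖t‖ ^ 2) := by
  unfold isoGaussianPDF; ring_nf

lemma isoGaussianPDF_sub (t δ : EuclideanSpace ℝ (Fin n)) :
    isoGaussianPDF n σ (t - δ) =
      Real.exp ((2 * ⟪δ, t⟫ - ‖δ‖ ^ 2) / (2 * σ ^ 2)) * isoGaussianPDF n σ t := by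
  unfold isoGaussianPDF
  rw [mul_left_comm, ← Real.exp_add, norm_sub_sq_real, real_inner_comm]
  ring_nf

lemma integral_isoGaussianPDF (hσ : σ ≠ 0) : ∫ t, isoGaussianPDF n σ t = 1 := by
  have h2πσ : 0 < 2 * π * σ ^ 2 := by positivity
  simp_rw [isoGaussianPDF_eq_mul_exp, integral_const_mul]
  rw [integral_rexp_neg_mul_sq_norm (by positivity), finrank_euclideanSpace_fin,
    show π / (1 / (2 * σ ^ 2)) = 2 * π * σ ^ 2 by field_simp, ← Real.rpow_add h2πσ]
  ring_nf; simp

lemma integrable_isoGaussianPDF (hσ : σ ≠ 0) : Integrable (isoGaussianPDF n σ) :=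
  Integrable.of_integral_ne_zero (by simp [integral_isoGaussianPDF hσ])

lemma isProbabilityMeasure_isoGaussian (hσ : σ ≠ 0) :
    IsProbabilityMeasure (isoGaussian n σ) := by
  constructor
  rw [isoGaussian_eq_withDensity, withDensity_apply _ MeasurableSet.univ, Measure.restrict_univ,
    ← ofReal_integral_eq_lintegral_ofReal (integrable_isoGaussianPDF hσ)
      (ae_of_all _ isoGaussianPDF_nonneg),
    integral_isoGaussianPDF hσ, ENNReal.ofReal_one]

lemma integral_isoGaussian {F : Type*} [NormedAddCommGroup F] [NormedSpace ℝ F]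
    (g : EuclideanSpace ℝ (Fin n) → F) :
    ∫ t, g t ∂isoGaussian n σ = ∫ t, isoGaussianPDF n σ t • g t := by
  rw [isoGaussian_eq_withDensity, integral_withDensity_eq_integral_toReal_smul
    (by unfold isoGaussianPDF; fun_prop) (ae_of_all _ fun _ => ENNReal.ofReal_lt_top)]
  simp_rw [ENNReal.toReal_ofReal (isoGaussianPDF_nonneg _)]

lemma setIntegral_isoGaussianPDF (hσ : σ ≠ 0) {S : Set (EuclideanSpace ℝ (Fin n))}
    (hS : MeasurableSet S) : ∫ t in S, isoGaussianPDF n σ t = (isoGaussian n σ).real S := by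
  have := isProbabilityMeasure_isoGaussian (n := n) hσ
  rw [← integral_indicator_one hS, integral_isoGaussian, ← integral_indicator hS]
  congr 1 with t
  by_cases ht : t ∈ S <;> simp [ht]

lemma charFun_isoGaussian (hσ : σ ≠ 0) (t : EuclideanSpace ℝ (Fin n)) :
    charFun (isoGaussian n σ) t = Complex.exp (-(σ ^ 2 * ‖t‖ ^ 2 / 2)) := by
  have h2πσ : 0 < 2 * π * σ ^ 2 := by positivity
  set b : ℂ := ((1 / (2 * σ ^ 2) : ℝ) : ℂ)
  have hb : 0 < b.re := by rw [Complex.ofReal_re]; positivity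
  have hpdf (x : EuclideanSpace ℝ (Fin n)) :
      isoGaussianPDF n σ x • Complex.exp (⟪x, t⟫ * Complex.I) =
        ((2 * π * σ ^ 2 : ℝ) ^ (-(n : ℝ) / 2) : ℝ) *
          Complex.exp (-b * ‖x‖ ^ 2 + Complex.I * ⟪t, x⟫) := by
    rw [isoGaussianPDF_eq_mul_exp, Complex.real_smul, Complex.ofReal_mul, mul_assoc,
      Complex.ofReal_exp, ← Complex.exp_add, real_inner_comm]
    push_cast [b]
    ring_nf
  rw [charFun_apply, integral_isoGaussian]
  simp_rw [hpdf]
  rw [integral_const_mul, integral_cexp_neg_mul_sq_norm_add hb, finrank_euclideanSpace_fin,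
    ← mul_assoc, Complex.ofReal_cpow h2πσ.le]
  have : (π : ℂ) / b = ((2 * π * σ ^ 2 : ℝ) : ℂ) := by push_cast [b]; field_simp
  rw [this, ← Complex.cpow_add _ _ (by exact_mod_cast h2πσ.ne')]
  push_cast [b]
  rw [neg_div, neg_add_cancel, Complex.cpow_zero, one_mul, Complex.I_sq]
  congr 1
  field_simp
  ring

lemma isoGaussian_map_inner (hσ : σ ≠ 0) (u : EuclideanSpace ℝ (Fin n)) :
    (isoGaussian n σ).map (⟪u, ·⟫) = gaussianReal 0 (σ ^ 2 * ‖u‖ ^ 2).toNNReal := by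
  have := isProbabilityMeasure_isoGaussian (n := n) hσ
  have : IsProbabilityMeasure ((isoGaussian n σ).map (⟪u, ·⟫)) :=
    Measure.isProbabilityMeasure_map (by fun_prop)
  refine Measure.ext_of_charFun (funext fun r => ?_)
  rw [charFun_map_inner, charFun_isoGaussian hσ, charFun_gaussianReal,
    Real.coe_toNNReal _ (by positivity), norm_smul, Real.norm_eq_abs]
  have hr : ((|r| : ℝ) : ℂ) ^ 2 = (r : ℂ) ^ 2 := by
    rw [← Complex.ofReal_pow, sq_abs, Complex.ofReal_pow]
  push_cast
  rw [mul_pow, hr]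
  ring_nf

lemma measureReal_isoGaussian_inner_le (hσ : 0 < σ) {u : EuclideanSpace ℝ (Fin n)}
    (hu : u ≠ 0) (a : ℝ) :
    (isoGaussian n σ).real {t | ⟪u, t⟫ ≤ a} = stdGaussianCDF (a / (σ * ‖u‖)) := by
  have hσu : 0 < σ * ‖u‖ := mul_pos hσ (norm_pos_iff.2 hu)
  set v := (σ * ‖u‖)⁻¹ • u
  have hset : {t | ⟪u, t⟫ ≤ a} = (⟪v, ·⟫) ⁻¹' Iic (a / (σ * ‖u‖)) := by
    ext t
    simp only [v, mem_ofPred_eq, mem_preimage, mem_Iic, real_inner_smul_left, le_div_iff₀ hσu]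
    field_simp
  have hvar : (σ ^ 2 * ‖v‖ ^ 2).toNNReal = 1 := by
    rw [norm_smul, norm_inv, Real.norm_of_nonneg hσu.le]
    field_simp
    exact Real.toNNReal_one
  rw [hset, ← map_measureReal_apply (by fun_prop) measurableSet_Iic,
    isoGaussian_map_inner hσ.ne', hvar, stdGaussianCDF_eq_measureReal]

lemma setIntegral_isoGaussianPDF_sub (hσ : σ ≠ 0) {S : Set (EuclideanSpace ℝ (Fin n))}
    (hS : MeasurableSet S) (δ : EuclideanSpace ℝ (Fin n)) :
    ∫ t in S, isoGaussianPDF n σ (t - δ) = (isoGaussian n σ).real ((· + δ) ⁻¹' S) := by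
  rw [← (measurePreserving_add_right volume δ).setIntegral_preimage_emb
    (measurableEmbedding_addRight δ)]
  simp_rw [add_sub_cancel_right]
  exact setIntegral_isoGaussianPDF hσ (hS.preimage (measurable_add_const δ))

lemma integral_mul_isoGaussianPDF_sub (g : EuclideanSpace ℝ (Fin n) → ℝ)
    (δ : EuclideanSpace ℝ (Fin n)) :
    ∫ t, g t * isoGaussianPDF n σ (t - δ) = ∫ t, g (t + δ) ∂isoGaussian n σ := by
  rw [← integral_add_right_eq_self _ δ, integral_isoGaussian]
  simp_rw [add_sub_cancel_right, smul_eq_mul, mul_comm]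

end IsoGaussian

noncomputable def gaussianSmoothing (n : ℕ) (σ : ℝ) (f : EuclideanSpace ℝ (Fin n) → ℝ)
    (x : EuclideanSpace ℝ (Fin n)) : ℝ :=
  ∫ t, f (x + t) ∂isoGaussian n σ

section GaussianSmoothing

variable {n : ℕ} {σ : ℝ} {f : EuclideanSpace ℝ (Fin n) → ℝ}

lemma stdGaussianCDF_sub_le_gaussianSmoothing_add (hσ : 0 < σ) (hf : Measurable f)
    (hf01 : ∀ t, f t ∈ Icc 0 1) (x δ : EuclideanSpace ℝ (Fin n))
    (hp : gaussianSmoothing n σ f x ∈ Ioo 0 1) :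
    stdGaussianCDF (stdGaussianCDFInv (gaussianSmoothing n σ f x) - ‖δ‖ / σ) ≤
      gaussianSmoothing n σ f (x + δ) := by
  rcases eq_or_ne δ 0 with rfl | hδ
  · simp [stdGaussianCDF_stdGaussianCDFInv hp]
  set β := stdGaussianCDFInv (gaussianSmoothing n σ f x)
  have hσδ : 0 < σ * ‖δ‖ := mul_pos hσ (norm_pos_iff.2 hδ)
  set S := {t | ⟪δ, t⟫ ≤ σ * ‖δ‖ * β}
  have hS : MeasurableSet S := measurableSet_le (by fun_prop) measurable_const
  have hratio (t : EuclideanSpace ℝ (Fin n)) :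
      Real.exp ((2 * ⟪δ, t⟫ - ‖δ‖ ^ 2) / (2 * σ ^ 2)) ≤
        Real.exp ((2 * (σ * ‖δ‖ * β) - ‖δ‖ ^ 2) / (2 * σ ^ 2)) ↔ t ∈ S := by
    rw [Real.exp_le_exp, div_le_div_iff_of_pos_right (by positivity)]
    simp only [S, mem_ofPred_eq]
    constructor <;> intro h <;> linarith
  have hlevel : ∫ t in S, isoGaussianPDF n σ t = ∫ t, f (x + t) * isoGaussianPDF n σ t := by
    rw [setIntegral_isoGaussianPDF hσ.ne' hS, measureReal_isoGaussian_inner_le hσ hδ,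
      mul_div_cancel_left₀ _ hσδ.ne', stdGaussianCDF_stdGaussianCDFInv hp, gaussianSmoothing,
      integral_isoGaussian]
    simp_rw [smul_eq_mul, mul_comm]
  have hshift : (· + δ) ⁻¹' S = {t | ⟪δ, t⟫ ≤ σ * ‖δ‖ * β - ‖δ‖ ^ 2} := by
    ext t
    simp only [S, mem_preimage, mem_ofPred_eq, inner_add_right, real_inner_self_eq_norm_sq]
    constructor <;> intro h <;> linarith
  calc stdGaussianCDF (β - ‖δ‖ / σ)
      = ∫ t in S, isoGaussianPDF n σ (t - δ) := by
        rw [setIntegral_isoGaussianPDF_sub hσ.ne' hS, hshift,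
          measureReal_isoGaussian_inner_le hσ hδ]
        congr 1
        field_simp
    _ ≤ ∫ t, f (x + t) * isoGaussianPDF n σ (t - δ) := by
        refine setIntegral_le_integral_mul_of_neymanPearson (integrable_isoGaussianPDF hσ.ne')
          ((integrable_isoGaussianPDF hσ.ne').comp_sub_right δ)
          (hf.comp (measurable_const_add x)).aestronglyMeasurable (fun t => hf01 _) hS
          (Real.exp_pos ((2 * (σ * ‖δ‖ * β) - ‖δ‖ ^ 2) / (2 * σ ^ 2))).le
          (fun t ht => ?_) (fun t ht => ?_) hlevel.le
        · rw [isoGaussianPDF_sub]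
          exact mul_le_mul_of_nonneg_right ((hratio t).2 ht) (isoGaussianPDF_nonneg t)
        · rw [isoGaussianPDF_sub]
          exact mul_le_mul_of_nonneg_right (not_le.1 (mt (hratio t).1 ht)).le
            (isoGaussianPDF_nonneg t)
    _ = gaussianSmoothing n σ f (x + δ) := by
        rw [integral_mul_isoGaussianPDF_sub, gaussianSmoothing]
        simp_rw [add_assoc, add_comm δ]

lemma gaussianSmoothing_one_sub (hσ : σ ≠ 0) (hf : Measurable f) (hf01 : ∀ t, f t ∈ Icc 0 1)
    (x : EuclideanSpace ℝ (Fin n)) :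
    gaussianSmoothing n σ (fun t => 1 - f t) x = 1 - gaussianSmoothing n σ f x := by
  have := isProbabilityMeasure_isoGaussian (n := n) hσ
  have hint : Integrable (fun t => f (x + t)) (isoGaussian n σ) :=
    Integrable.of_bound (hf.comp (measurable_const_add x)).aestronglyMeasurable 1
      (ae_of_all _ fun t => abs_le.2 ⟨by linarith [(hf01 (x + t)).1], (hf01 (x + t)).2⟩)
  rw [gaussianSmoothing, integral_sub (integrable_const 1) hint, integral_const, probReal_univ,
    one_smul, gaussianSmoothing]

lemma gaussianSmoothing_add_le_stdGaussianCDF_add (hσ : 0 < σ) (hf : Measurable f)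
    (hf01 : ∀ t, f t ∈ Icc 0 1) (x δ : EuclideanSpace ℝ (Fin n))
    (hp : gaussianSmoothing n σ f x ∈ Ioo 0 1) :
    gaussianSmoothing n σ f (x + δ) ≤
      stdGaussianCDF (stdGaussianCDFInv (gaussianSmoothing n σ f x) + ‖δ‖ / σ) := by
  have hf01' (t : EuclideanSpace ℝ (Fin n)) : 1 - f t ∈ Icc (0 : ℝ) 1 :=
    ⟨by linarith [(hf01 t).2], by linarith [(hf01 t).1]⟩
  have hcompl := gaussianSmoothing_one_sub hσ.ne' hf hf01
  have hp' : gaussianSmoothing n σ (fun t => 1 - f t) x ∈ Ioo 0 1 := by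
    rw [hcompl]; exact ⟨by linarith [hp.2], by linarith [hp.1]⟩
  have h := stdGaussianCDF_sub_le_gaussianSmoothing_add (f := fun t => 1 - f t) hσ
    (measurable_const.sub hf) hf01' x δ hp'
  rw [hcompl, hcompl, stdGaussianCDFInv_one_sub hp, ← neg_add', stdGaussianCDF_neg] at h
  linarith

end GaussianSmoothing

theorem cohen_robustness_guarantee_general (n : ℕ) (σ : ℝ) (hσ : 0 < σ)
    (fA fB : EuclideanSpace ℝ (Fin n) → ℝ)
    (hfA : Measurable fA) (hfB : Measurable fB)
    (hfA01 : ∀ t, fA t ∈ Set.Icc (0 : ℝ) 1) (hfB01 : ∀ t, fB t ∈ Set.Icc (0 : ℝ) 1)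
    (fhatA fhatB : EuclideanSpace ℝ (Fin n) → ℝ)
    (hfhatA : ∀ x, fhatA x = ∫ t, fA (x + t) ∂(isoGaussian n σ))
    (hfhatB : ∀ x, fhatB x = ∫ t, fB (x + t) ∂(isoGaussian n σ))
    (hA01 : ∀ x, fhatA x ∈ Set.Ioo (0 : ℝ) 1)
    (hB01 : ∀ x, fhatB x ∈ Set.Ioo (0 : ℝ) 1)
    (x : EuclideanSpace ℝ (Fin n)) (pA pB : ℝ)
    (hpA : pA = fhatA x) (hpB : pB = fhatB x) :
    (∀ δ : EuclideanSpace ℝ (Fin n),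
      ‖δ‖ < (σ / 2) * (stdGaussianCDFInv pA - stdGaussianCDFInv pB) →
      fhatB (x + δ) < fhatA (x + δ)) ∧
    (∀ δ : EuclideanSpace ℝ (Fin n),
      fhatA (x + δ) ≤ fhatB (x + δ) →
      ‖δ‖ ≥ (σ / 2) * (stdGaussianCDFInv pA - stdGaussianCDFInv pB)) := by
  have hA : fhatA = gaussianSmoothing n σ fA := funext hfhatA
  have hB : fhatB = gaussianSmoothing n σ fB := funext hfhatB
  have lower (δ : EuclideanSpace ℝ (Fin n)) :
      stdGaussianCDF (stdGaussianCDFInv pA - ‖δ‖ / σ) ≤ fhatA (x + δ) := by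
    rw [hpA, hA]
    exact stdGaussianCDF_sub_le_gaussianSmoothing_add hσ hfA hfA01 x δ (hA ▸ hA01 x)
  have upper (δ : EuclideanSpace ℝ (Fin n)) :
      fhatB (x + δ) ≤ stdGaussianCDF (stdGaussianCDFInv pB + ‖δ‖ / σ) := by
    rw [hpB, hB]
    exact gaussianSmoothing_add_le_stdGaussianCDF_add hσ hfB hfB01 x δ (hB ▸ hB01 x)
  have certified (δ : EuclideanSpace ℝ (Fin n))
      (hδ : ‖δ‖ < (σ / 2) * (stdGaussianCDFInv pA - stdGaussianCDFInv pB)) :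
      fhatB (x + δ) < fhatA (x + δ) := by
    have hgap : 2 * (‖δ‖ / σ) < stdGaussianCDFInv pA - stdGaussianCDFInv pB := by
      rw [mul_div_assoc', div_lt_iff₀ hσ]; linarith
    calc fhatB (x + δ) ≤ stdGaussianCDF (stdGaussianCDFInv pB + ‖δ‖ / σ) := upper δ
      _ < stdGaussianCDF (stdGaussianCDFInv pA - ‖δ‖ / σ) :=
          strictMono_stdGaussianCDF (by linarith)
      _ ≤ fhatA (x + δ) := lower δ
  exact ⟨certified, fun δ hδ => not_lt.1 fun h => (certified δ h).not_ge hδ⟩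

/-- robustness guarantee of Cohen et al.: with `σ > 0`, measurable
`f_A, f_B : ℝⁿ → [0,1]` whose σ-smoothed transforms take values in `(0,1)`,
`p_A = f̂_A(x)`, `p_B = f̂_B(x)`, `p_B ≤ p_A`: every `δ` with
`‖δ‖₂ < (σ/2)(Φ⁻¹(p_A) - Φ⁻¹(p_B))` satisfies `f̂_A(x+δ) > f̂_B(x+δ)`;
equivalently, any `δ` with `f̂_A(x+δ) ≤ f̂_B(x+δ)` satisfies
`‖δ‖₂ ≥ (σ/2)(Φ⁻¹(p_A) - Φ⁻¹(p_B))`. -/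
theorem cohen_robustness_guarantee (n : ℕ) (σ : ℝ) (hσ : 0 < σ)
    (fA fB : EuclideanSpace ℝ (Fin n) → ℝ)
    (hfA : Measurable fA) (hfB : Measurable fB)
    (hfA01 : ∀ t, fA t ∈ Set.Icc (0 : ℝ) 1) (hfB01 : ∀ t, fB t ∈ Set.Icc (0 : ℝ) 1)
    (fhatA fhatB : EuclideanSpace ℝ (Fin n) → ℝ)
    (hfhatA : ∀ x, fhatA x = ∫ t, fA (x + t) ∂(isoGaussian n σ))
    (hfhatB : ∀ x, fhatB x = ∫ t, fB (x + t) ∂(isoGaussian n σ))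
    (hA01 : ∀ x, fhatA x ∈ Set.Ioo (0 : ℝ) 1)
    (hB01 : ∀ x, fhatB x ∈ Set.Ioo (0 : ℝ) 1)
    (x : EuclideanSpace ℝ (Fin n)) (pA pB : ℝ)
    (hpA : pA = fhatA x) (hpB : pB = fhatB x) (hle : pB ≤ pA) :
    (∀ δ : EuclideanSpace ℝ (Fin n),
      ‖δ‖ < (σ / 2) * (stdGaussianCDFInv pA - stdGaussianCDFInv pB) →
      fhatB (x + δ) < fhatA (x + δ)) ∧
    (∀ δ : EuclideanSpace ℝ (Fin n),
      fhatA (x + δ) ≤ fhatB (x + δ) →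
      ‖δ‖ ≥ (σ / 2) * (stdGaussianCDFInv pA - stdGaussianCDFInv pB)) :=
  cohen_robustness_guarantee_general n σ hσ fA fB hfA hfB hfA01 hfB01 fhatA fhatB hfhatA hfhatB hA01
    hB01 x pA pB hpA hpB
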